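/- The Drinfeld–Sklyanin bracket is compatible with the weight filtration: assign to each variable z_i and ξ_i the weight i, and decompose {·,·}_DS = {·,·}_0 + {·,·}_1, where {f,g}_0 = Σ_i z_iξ_i(∂f/∂z_i·∂g/∂ξ_i − ∂f/∂ξ_i·∂g/∂z_i) − Σ_{i<j} z_iz_j(∂f/∂z_i·∂g/∂z_j − ∂f/∂z_j·∂g/∂z_i) + Σ_{i<j} ξ_iξ_j(∂f/∂ξ_i·∂g/∂ξ_j − ∂f/∂ξ_j·∂g/∂ξ_i) and {f,g}_1 = 2Σ_{i>j} z_iξ_i(∂f/∂z_j·∂g/∂ξ_j − ∂f/∂ξ_j·∂g/∂z_j). Then for f, g weight-homogeneous of weights p and q, the bracket {f,g}_0 is weight-homogeneous of weight p+q (or zero), and every weight-homogeneous component of {f,g}_1 has weight strictly greater than p+q; in particular {f,g}_DS lies in the span of monomials of weight at least p+q, with weight-(p+q) component equal to {f,g}_0. -/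
import Mathlib


open MvPolynomial

noncomputable section

/-- The polynomial ring `R = ℂ[z_1,…,z_n,ξ_1,…,ξ_n]`. -/
abbrev R (n : ℕ) := MvPolynomial (Fin n ⊕ Fin n) ℂ

/-- The variable `z_i`. -/
def z (n : ℕ) (i : Fin n) : R n := X (Sum.inl i)

/-- The variable `ξ_i`. -/
def ξ (n : ℕ) (i : Fin n) : R n := X (Sum.inr i)

/-- The weights: the variables `z_i` and `ξ_i` both get weight `i`
(in 1-based mathematical indexing, i.e. `(i : Fin n) ↦ (i:ℕ) + 1`). -/
def wt (n : ℕ) : Fin n ⊕ Fin n → ℕ :=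
  Sum.elim (fun i => (i : ℕ) + 1) (fun i => (i : ℕ) + 1)

/-- The weight-`0` part `{f,g}_0` of the Drinfeld–Sklyanin bracket. -/
def br0 (n : ℕ) (f g : R n) : R n :=
  (∑ i, z n i * ξ n i *
      (pderiv (Sum.inl i) f * pderiv (Sum.inr i) g -
       pderiv (Sum.inr i) f * pderiv (Sum.inl i) g))
  - (∑ i, ∑ j, if i < j then z n i * z n j *
      (pderiv (Sum.inl i) f * pderiv (Sum.inl j) g -
       pderiv (Sum.inl j) f * pderiv (Sum.inl i) g) else 0)
  + (∑ i, ∑ j, if i < j then ξ n i * ξ n j *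
      (pderiv (Sum.inr i) f * pderiv (Sum.inr j) g -
       pderiv (Sum.inr j) f * pderiv (Sum.inr i) g) else 0)

/-- The positive-weight part `{f,g}_1 = 2Σ_{i>j} z_iξ_i(∂_{z_j}f·∂_{ξ_j}g − ∂_{ξ_j}f·∂_{z_j}g)`
of the Drinfeld–Sklyanin bracket. -/
def br1 (n : ℕ) (f g : R n) : R n :=
  2 * ∑ i, ∑ j, if j < i then z n i * ξ n i *
      (pderiv (Sum.inl j) f * pderiv (Sum.inr j) g -
       pderiv (Sum.inr j) f * pderiv (Sum.inl j) g) else 0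

/-- The Drinfeld–Sklyanin bracket `{f,g}_DS = {f,g}_0 + {f,g}_1`. -/
def brDS (n : ℕ) (f g : R n) : R n := br0 n f g + br1 n f g


variable {σ : Type*} [DecidableEq σ] {w : σ → ℕ} {f g : MvPolynomial σ ℂ} {p q : ℕ}

lemma weight_single_one (w : σ → ℕ) (i : σ) :
    (Finsupp.weight w) (Finsupp.single i 1) = w i := by
  simp [Finsupp.weight_apply, Finsupp.sum_single_index]

lemma pderiv_as_sum (i : σ) (f : MvPolynomial σ ℂ) :
    pderiv i f = ∑ d ∈ f.support,
      monomial (d - Finsupp.single i 1) (coeff d f * d i) := by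
  conv_lhs => rw [f.as_sum]
  rw [map_sum]
  exact Finset.sum_congr rfl fun d _ => pderiv_monomial

lemma hom_X_mul_pderiv (hf : f.IsWeightedHomogeneous w p) (i : σ) :
    (X i * pderiv i f).IsWeightedHomogeneous w p := by
  rw [pderiv_as_sum, Finset.mul_sum]
  apply IsWeightedHomogeneous.sum
  intro d hd
  rcases Nat.eq_zero_or_pos (d i) with h | h
  · simp only [h, Nat.cast_zero, mul_zero, monomial_zero, mul_zero]
    exact isWeightedHomogeneous_zero _ _ _
  · have hle : Finsupp.single i 1 ≤ d := by
      rwa [Finsupp.single_le_iff]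
    rw [X, monomial_mul, add_tsub_cancel_of_le hle, one_mul]
    exact isWeightedHomogeneous_monomial _ _ _ (hf (mem_support_iff.mp hd))

lemma weight_support_pderiv (hf : f.IsWeightedHomogeneous w p) (i : σ) :
    ∀ d ∈ (pderiv i f).support, (Finsupp.weight w) d + w i = p := by
  intro d hd
  rw [pderiv_as_sum] at hd
  obtain ⟨e, he, hd⟩ := Finset.mem_biUnion.mp (support_sum hd)
  classical
  rw [support_monomial] at hd
  split_ifs at hd with h0
  · exact absurd hd (Finset.notMem_empty d)
  · have hei : e i ≠ 0 := by
      intro h; exact h0 (by simp [h])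
    have hle : Finsupp.single i 1 ≤ e := by
      rw [Finsupp.single_le_iff]; omega
    rw [Finset.mem_singleton] at hd
    subst hd
    rw [← weight_single_one w i, ← map_add, tsub_add_cancel_of_le hle]
    exact hf (mem_support_iff.mp he)

lemma comp_term_eq_zero (hf : f.IsWeightedHomogeneous w p)
    (hg : g.IsWeightedHomogeneous w q) (a b c e : σ) (r : ℕ)
    (hr : r + w c + w e < p + q + w a + w b) :
    weightedHomogeneousComponent w r (X a * X b * (pderiv c f * pderiv e g)) = 0 := by
  ext d
  rw [coeff_weightedHomogeneousComponent, coeff_zero]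
  split_ifs with h
  · by_contra hc
    have hd := mem_support_iff.mpr hc
    obtain ⟨d1, hd1, d2, hd2, hsum⟩ := Finset.mem_add.mp (support_mul _ _ hd)
    obtain ⟨da, hda, db, hdb, hsum1⟩ := Finset.mem_add.mp (support_mul _ _ hd1)
    obtain ⟨dc, hdc, de, hde, hsum2⟩ := Finset.mem_add.mp (support_mul _ _ hd2)
    rw [support_X, Finset.mem_singleton] at hda hdb
    have h1 : (Finsupp.weight w) dc + w c = p := weight_support_pderiv hf c dc hdc
    have h2 : (Finsupp.weight w) de + w e = q := weight_support_pderiv hg e de hde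
    have : (Finsupp.weight w) d = w a + w b + ((Finsupp.weight w) dc + (Finsupp.weight w) de) := by
      rw [← hsum, ← hsum1, ← hsum2, hda, hdb]
      simp only [map_add, weight_single_one]
    omega
  · rfl

/-- The Drinfeld–Sklyanin bracket is compatible with the weight
filtration: for `f, g` weight-homogeneous of weights `p` and `q`, the bracket `{f,g}_0`
is weight-homogeneous of weight `p+q` (or zero), every weight-homogeneous component of
`{f,g}_1` has weight strictly greater than `p+q`, and in particular `{f,g}_DS` lies in the
span of monomials of weight at least `p+q`, with weight-`(p+q)` component equal to
`{f,g}_0`. -/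
theorem stmt_16 (n : ℕ) (hn : 1 ≤ n) (p q : ℕ) (f g : R n)
    (hf : f.IsWeightedHomogeneous (wt n) p) (hg : g.IsWeightedHomogeneous (wt n) q) :
    (br0 n f g).IsWeightedHomogeneous (wt n) (p + q) ∧
    (∀ r : ℕ, r ≤ p + q → weightedHomogeneousComponent (wt n) r (br1 n f g) = 0) ∧
    (∀ r : ℕ, r < p + q → weightedHomogeneousComponent (wt n) r (brDS n f g) = 0) ∧
    weightedHomogeneousComponent (wt n) (p + q) (brDS n f g) = br0 n f g := by
  classical
  have H0 : (br0 n f g).IsWeightedHomogeneous (wt n) (p + q) := by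
    rw [← mem_weightedHomogeneousSubmodule]
    unfold br0
    refine Submodule.add_mem _ (Submodule.sub_mem _ ?_ ?_) ?_
    · apply Submodule.sum_mem; intro i _
      rw [mem_weightedHomogeneousSubmodule]
      have e1 : z n i * ξ n i * (pderiv (Sum.inl i) f * pderiv (Sum.inr i) g -
          pderiv (Sum.inr i) f * pderiv (Sum.inl i) g) =
          (X (Sum.inl i) * pderiv (Sum.inl i) f) * (X (Sum.inr i) * pderiv (Sum.inr i) g) -
          (X (Sum.inr i) * pderiv (Sum.inr i) f) * (X (Sum.inl i) * pderiv (Sum.inl i) g) := by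
        unfold z ξ; ring
      rw [e1, ← mem_weightedHomogeneousSubmodule]
      exact Submodule.sub_mem _
        ((hom_X_mul_pderiv hf _).mul (hom_X_mul_pderiv hg _))
        ((hom_X_mul_pderiv hf _).mul (hom_X_mul_pderiv hg _))
    · apply Submodule.sum_mem; intro i _
      apply Submodule.sum_mem; intro j _
      split_ifs with hij
      · have e1 : z n i * z n j * (pderiv (Sum.inl i) f * pderiv (Sum.inl j) g -
            pderiv (Sum.inl j) f * pderiv (Sum.inl i) g) =
            (X (Sum.inl i) * pderiv (Sum.inl i) f) * (X (Sum.inl j) * pderiv (Sum.inl j) g) -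
            (X (Sum.inl j) * pderiv (Sum.inl j) f) * (X (Sum.inl i) * pderiv (Sum.inl i) g) := by
          unfold z; ring
        rw [mem_weightedHomogeneousSubmodule, e1, ← mem_weightedHomogeneousSubmodule]
        exact Submodule.sub_mem _
          ((hom_X_mul_pderiv hf _).mul (hom_X_mul_pderiv hg _))
          ((hom_X_mul_pderiv hf _).mul (hom_X_mul_pderiv hg _))
      · exact Submodule.zero_mem _
    · apply Submodule.sum_mem; intro i _
      apply Submodule.sum_mem; intro j _
      split_ifs with hij
      · have e1 : ξ n i * ξ n j * (pderiv (Sum.inr i) f * pderiv (Sum.inr j) g -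
            pderiv (Sum.inr j) f * pderiv (Sum.inr i) g) =
            (X (Sum.inr i) * pderiv (Sum.inr i) f) * (X (Sum.inr j) * pderiv (Sum.inr j) g) -
            (X (Sum.inr j) * pderiv (Sum.inr j) f) * (X (Sum.inr i) * pderiv (Sum.inr i) g) := by
          unfold ξ; ring
        rw [mem_weightedHomogeneousSubmodule, e1, ← mem_weightedHomogeneousSubmodule]
        exact Submodule.sub_mem _
          ((hom_X_mul_pderiv hf _).mul (hom_X_mul_pderiv hg _))
          ((hom_X_mul_pderiv hf _).mul (hom_X_mul_pderiv hg _))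
      · exact Submodule.zero_mem _
  have H1 : ∀ r : ℕ, r ≤ p + q → weightedHomogeneousComponent (wt n) r (br1 n f g) = 0 := by
    intro r hr
    unfold br1
    rw [two_mul, map_add]
    have hS : weightedHomogeneousComponent (wt n) r (∑ i, ∑ j, if j < i then z n i * ξ n i *
        (pderiv (Sum.inl j) f * pderiv (Sum.inr j) g -
         pderiv (Sum.inr j) f * pderiv (Sum.inl j) g) else 0) = 0 := by
      rw [map_sum]
      apply Finset.sum_eq_zero; intro i _
      rw [map_sum]
      apply Finset.sum_eq_zero; intro j _
      split_ifs with hij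
      · have hji : (j : ℕ) < (i : ℕ) := hij
        have e1 : z n i * ξ n i * (pderiv (Sum.inl j) f * pderiv (Sum.inr j) g -
            pderiv (Sum.inr j) f * pderiv (Sum.inl j) g) =
            X (Sum.inl i) * X (Sum.inr i) * (pderiv (Sum.inl j) f * pderiv (Sum.inr j) g) -
            X (Sum.inl i) * X (Sum.inr i) * (pderiv (Sum.inr j) f * pderiv (Sum.inl j) g) := by
          unfold z ξ; ring
        have hw1 : wt n (Sum.inl i) = (i : ℕ) + 1 := rfl
        have hw2 : wt n (Sum.inr i) = (i : ℕ) + 1 := rfl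
        have hw3 : wt n (Sum.inl j) = (j : ℕ) + 1 := rfl
        have hw4 : wt n (Sum.inr j) = (j : ℕ) + 1 := rfl
        rw [e1, map_sub,
          comp_term_eq_zero hf hg (Sum.inl i) (Sum.inr i) (Sum.inl j) (Sum.inr j) r
            (by rw [hw1, hw2, hw3, hw4]; omega),
          comp_term_eq_zero hf hg (Sum.inl i) (Sum.inr i) (Sum.inr j) (Sum.inl j) r
            (by rw [hw1, hw2, hw3, hw4]; omega),
          sub_zero]
      · exact map_zero _
    rw [hS, add_zero]
  refine ⟨H0, H1, ?_, ?_⟩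
  · intro r hr
    unfold brDS
    rw [map_add, H0.weightedHomogeneousComponent_ne r (ne_of_lt hr), H1 r hr.le, add_zero]
  · unfold brDS
    rw [map_add, H0.weightedHomogeneousComponent_same, H1 _ le_rfl, add_zero]
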